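/- The ratio of the Kirchhoff index of G_n to its Wiener index tends to 1/6 as n → ∞; that is, the sequence ((n³ + 4n² − n)/12) / W(G_n), where (n³ + 4n² − n)/12 is the Kirchhoff index of G_n and W(G_n) is its Wiener index, converges to 1/6 as n → ∞. -/

import Mathlib

/-- The Wiener index of a graph: half the sum of the graph distances `d(u,v)` over all ordered
pairs `(u,v)` of vertices (a finite sum for a finite graph, expressed with `finsum` so that it is
defined for every `n`). -/
noncomputable def wienerIndex {V : Type*} (G : SimpleGraph V) : ℕ :=
  (∑ᶠ u : V, ∑ᶠ v : V, G.dist u v) / 2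

/-- The graph `G_n = P₂ ⊠ C_n`: vertex set `(ZMod n) × Fin 2`, where two distinct vertices
`(i,a)` and `(j,b)` are adjacent iff `i = j` or `i = j + 1` or `j = i + 1` in `ZMod n`. -/
def Gn (n : ℕ) : SimpleGraph (ZMod n × Fin 2) where
  Adj x y := x ≠ y ∧ (x.1 = y.1 ∨ x.1 = y.1 + 1 ∨ y.1 = x.1 + 1)
  symm := by
    constructor
    rintro x y ⟨hne, h | h | h⟩
    · exact ⟨hne.symm, Or.inl h.symm⟩
    · exact ⟨hne.symm, Or.inr (Or.inr h)⟩
    · exact ⟨hne.symm, Or.inr (Or.inl h)⟩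
  loopless := by constructor; rintro x ⟨hne, -⟩; exact hne rfl

instance (n : ℕ) : DecidableRel (Gn n).Adj :=
  fun _ _ => inferInstanceAs (Decidable (_ ∧ _))

/-!
Distinct vertices `(i, a)` and `(j, b)` of `G_n` are at distance `max |i - j|ₙ 1`, where `|k|ₙ` is
the cyclic distance `min (k, n - k)` (`ZMod.valMinAbs`): walking along the cycle one may switch
level for free, and `|· - j|ₙ` changes by at most one along an edge. Since `∑ₖ |k|ₙ = ⌊n²/4⌋`, this
gives `W(G_n) = n (2⌊n²/4⌋ + 1) ∼ n³/2`, while the Kirchhoff index is `∼ n³/12`.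
-/

open Filter Topology

theorem SimpleGraph.Walk.le_add_length_of_adj {V : Type*} {G : SimpleGraph V} (f : V → ℕ)
    (hf : ∀ x y, G.Adj x y → f x ≤ f y + 1) {u v : V} (p : G.Walk u v) :
    f u ≤ f v + p.length := by
  induction p with
  | nil => simp
  | cons h _ ih => rw [SimpleGraph.Walk.length_cons]; have := hf _ _ h; omega

theorem SimpleGraph.Reachable.le_add_dist_of_adj {V : Type*} {G : SimpleGraph V} (f : V → ℕ)
    (hf : ∀ x y, G.Adj x y → f x ≤ f y + 1) {u v : V} (h : G.Reachable u v) :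
    f u ≤ f v + G.dist u v := by
  obtain ⟨p, hp⟩ := h.exists_walk_length_eq_dist
  exact hp ▸ p.le_add_length_of_adj f hf

namespace ZMod

theorem natAbs_valMinAbs_one_le (n : ℕ) : (1 : ZMod n).valMinAbs.natAbs ≤ 1 := by
  rcases eq_zero_or_neZero n with rfl | _
  · rfl
  · rw [valMinAbs_natAbs_eq_min, val_one_eq_one_mod]
    exact (min_le_left _ _).trans (Nat.mod_le 1 n)

theorem natAbs_valMinAbs_sub_le {n : ℕ} (a b c : ZMod n) :
    (a - c).valMinAbs.natAbs ≤ (a - b).valMinAbs.natAbs + (b - c).valMinAbs.natAbs :=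
  calc (a - c).valMinAbs.natAbs = ((a - b) + (b - c)).valMinAbs.natAbs := by
        rw [sub_add_sub_cancel]
    _ ≤ _ := (natAbs_valMinAbs_add_le _ _).trans (Int.natAbs_add_le _ _)

theorem sum_natAbs_valMinAbs (n : ℕ) [NeZero n] :
    ∑ x : ZMod n, x.valMinAbs.natAbs = ∑ v ∈ Finset.range n, min v (n - v) := by
  obtain ⟨m, rfl⟩ : ∃ m, n = m + 1 := Nat.exists_eq_succ_of_ne_zero (NeZero.ne n)
  -- `ZMod (m + 1)` is `Fin (m + 1)` by definition, and `ZMod.val` is `Fin.val`.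
  simp only [valMinAbs_natAbs_eq_min]
  exact Fin.sum_univ_eq_sum_range (fun v => min v (m + 1 - v)) (m + 1)

end ZMod

theorem Nat.sum_range_min_sub (n : ℕ) : ∑ v ∈ Finset.range n, min v (n - v) = n * n / 4 := by
  induction n using Nat.twoStepInduction with
  | zero => rfl
  | one => rfl
  | more n ih _ =>
    have hshift (v : ℕ) : min (v + 2) (n + 2 - (v + 2)) = min v (n - v) + min 2 (n - 2 * v) := by
      omega
    have hsteps (k : ℕ) : ∑ v ∈ Finset.range k, min 2 (n - 2 * v) = min n (2 * k) := by
      induction k with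
      | zero => simp
      | succ k ihk => rw [Finset.sum_range_succ, ihk]; omega
    rw [Finset.sum_range_succ', Finset.sum_range_succ']
    simp only [add_assoc, Nat.reduceAdd, hshift, Finset.sum_add_distrib, ih, hsteps]
    have : (n + 2) * (n + 2) = n * n + 4 * (n + 1) := by ring
    omega

namespace Gn

open SimpleGraph

variable {n : ℕ}

lemma exists_walk_length_le_one {x y : ZMod n × Fin 2}
    (h : x.1 = y.1 ∨ x.1 = y.1 + 1 ∨ y.1 = x.1 + 1) : ∃ p : (Gn n).Walk x y, p.length ≤ 1 := by
  by_cases hxy : x = y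
  · exact hxy ▸ ⟨.nil, zero_le_one⟩
  · exact ⟨.cons ⟨hxy, h⟩ .nil, le_rfl⟩

lemma exists_walk_add (i : ZMod n) (a b : Fin 2) (m : ℕ) :
    ∃ p : (Gn n).Walk (i, a) (i + m, b), p.length ≤ max m 1 := by
  induction m with
  | zero =>
    rw [Nat.cast_zero, add_zero]
    exact exists_walk_length_le_one (Or.inl rfl)
  | succ m ih =>
    rcases Nat.eq_zero_or_pos m with rfl | hm
    · rw [zero_add, Nat.cast_one]
      exact exists_walk_length_le_one (Or.inr (Or.inr rfl))
    obtain ⟨p, hp⟩ := ih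
    obtain ⟨q, hq⟩ := exists_walk_length_le_one (x := (i + (m : ZMod n), b))
      (y := (i + ((m + 1 : ℕ) : ZMod n), b))
      (Or.inr (Or.inr (by push_cast; ring)))
    exact ⟨p.append q, by rw [Walk.length_append]; omega⟩

lemma dist_add_le (i : ZMod n) (a b : Fin 2) (m : ℕ) :
    (Gn n).dist (i, a) (i + m, b) ≤ max m 1 :=
  let ⟨p, hp⟩ := exists_walk_add i a b m
  (SimpleGraph.dist_le p).trans hp

lemma reachable [NeZero n] (u v : ZMod n × Fin 2) : (Gn n).Reachable u v := by
  obtain ⟨p, -⟩ := exists_walk_add u.1 u.2 v.2 (v.1 - u.1).val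
  rw [ZMod.natCast_zmod_val, add_sub_cancel] at p
  exact ⟨p⟩

lemma natAbs_valMinAbs_le_dist [NeZero n] (u v : ZMod n × Fin 2) :
    (u.1 - v.1).valMinAbs.natAbs ≤ (Gn n).dist u v := by
  have hstep : ∀ x y, (Gn n).Adj x y →
      (x.1 - v.1).valMinAbs.natAbs ≤ (y.1 - v.1).valMinAbs.natAbs + 1 := by
    rintro x y ⟨-, h⟩
    refine (ZMod.natAbs_valMinAbs_sub_le x.1 y.1 v.1).trans ?_
    rw [add_comm]
    gcongr
    rcases h with h | h | h
    · simp [h]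
    · simpa [h] using ZMod.natAbs_valMinAbs_one_le n
    · simpa [h] using ZMod.natAbs_valMinAbs_one_le n
  simpa using (reachable u v).le_add_dist_of_adj _ hstep

lemma dist_le_max [NeZero n] (i j : ZMod n) (a b : Fin 2) :
    (Gn n).dist (i, a) (j, b) ≤ max (i - j).valMinAbs.natAbs 1 := by
  have hcast := ZMod.natCast_natAbs_valMinAbs (j - i)
  rw [← ZMod.natAbs_valMinAbs_neg, neg_sub]
  split_ifs at hcast
  · calc (Gn n).dist (i, a) (j, b) = (Gn n).dist (i, a) (i + (j - i).valMinAbs.natAbs, b) := by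
          rw [hcast, add_sub_cancel]
      _ ≤ _ := dist_add_le i a b _
  · calc (Gn n).dist (i, a) (j, b) = (Gn n).dist (j, b) (j + (j - i).valMinAbs.natAbs, a) := by
          rw [hcast, neg_sub, add_sub_cancel, SimpleGraph.dist_comm]
      _ ≤ _ := dist_add_le j b a _

lemma dist_of_fst_ne [NeZero n] {i j : ZMod n} (hij : i ≠ j) (a b : Fin 2) :
    (Gn n).dist (i, a) (j, b) = (i - j).valMinAbs.natAbs := by
  have hpos : 0 < (i - j).valMinAbs.natAbs := by simpa [sub_eq_zero] using hij
  exact le_antisymm ((dist_le_max i j a b).trans (max_le le_rfl hpos))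
    (natAbs_valMinAbs_le_dist (i, a) (j, b))

lemma dist_of_fst_eq (i : ZMod n) (a b : Fin 2) :
    (Gn n).dist (i, a) (i, b) = if a = b then 0 else 1 := by
  split_ifs with hab
  · rw [hab, dist_self]
  · exact dist_eq_one_iff_adj.mpr ⟨by simpa using hab, Or.inl rfl⟩

lemma sum_dist_fin_two [NeZero n] (i j : ZMod n) :
    ∑ a : Fin 2, ∑ b : Fin 2, (Gn n).dist (i, a) (j, b) =
      4 * (i - j).valMinAbs.natAbs + if i = j then 2 else 0 := by
  by_cases hij : i = j
  · subst hij
    simp [dist_of_fst_eq, Fin.sum_univ_two]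
  · simp only [dist_of_fst_ne hij, Fin.sum_univ_two, if_neg hij]
    ring

lemma sum_sum_dist [NeZero n] :
    ∑ u, ∑ v, (Gn n).dist u v = n * (4 * (n * n / 4) + 2) := by
  have hrow (i : ZMod n) : ∑ j, (i - j).valMinAbs.natAbs = n * n / 4 := by
    rw [← Nat.sum_range_min_sub, ← ZMod.sum_natAbs_valMinAbs]
    exact Fintype.sum_equiv (Equiv.subLeft i) _ _ (fun j => by simp)
  simp only [Fintype.sum_prod_type]
  rw [Finset.sum_congr rfl (fun i _ => Finset.sum_comm)]
  simp only [sum_dist_fin_two, Finset.sum_add_distrib, ← Finset.mul_sum, hrow]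
  simp only [Finset.sum_ite_eq, Finset.mem_univ, if_true, Finset.sum_const, Finset.card_univ,
    ZMod.card, smul_eq_mul]
  ring

lemma wienerIndex_eq [NeZero n] : wienerIndex (Gn n) = n * (2 * (n * n / 4) + 1) := by
  simp only [wienerIndex, finsum_eq_sum_of_fintype, sum_sum_dist]
  rw [show 4 * (n * n / 4) + 2 = 2 * (2 * (n * n / 4) + 1) by ring, mul_left_comm,
    Nat.mul_div_cancel_left _ two_pos]

lemma tendsto_wienerIndex_div_cube :
    Tendsto (fun n : ℕ => (wienerIndex (Gn n) : ℝ) / n ^ 3) atTop (𝓝 (1 / 2)) := by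
  have hfloor : Tendsto (fun n : ℕ => (⌊(n : ℝ) ^ 2 / 4⌋₊ : ℝ) / ((n : ℝ) ^ 2 / 4)) atTop (𝓝 1) :=
    tendsto_nat_floor_div_atTop.comp <|
      ((tendsto_pow_atTop two_ne_zero).comp tendsto_natCast_atTop_atTop).atTop_div_const
        (by norm_num)
  have hinv : Tendsto (fun n : ℕ => ((n : ℝ)⁻¹) ^ 2) atTop (𝓝 0) := by
    simpa using (tendsto_inv_atTop_nhds_zero_nat (𝕜 := ℝ)).pow 2
  -- `W(G_n) / n³ = ½ · ⌊n²/4⌋ / (n²/4) + n⁻²`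
  have hsum := (hfloor.const_mul (1 / 2 : ℝ)).add hinv
  rw [show (1 / 2 : ℝ) = 1 / 2 * 1 + 0 by norm_num]
  refine hsum.congr' ?_
  filter_upwards [eventually_ne_atTop 0] with n hn
  have : NeZero n := ⟨hn⟩
  have hfl : ⌊(n : ℝ) ^ 2 / 4⌋₊ = n * n / 4 := by
    rw [← Nat.floor_div_eq_div (K := ℝ)]
    push_cast
    ring_nf
  simp only [hfl, wienerIndex_eq]
  push_cast
  field_simp
  ring

end Gn

/-- The ratio of the Kirchhoff index `(n³ + 4n² − n)/12` of `G_n = P₂ ⊠ C_n`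
to its Wiener index `W(G_n)` converges to `1/6` as `n → ∞`. -/
theorem kirchhoff_div_wiener_tendsto :
    Filter.Tendsto
      (fun n : ℕ => (((n : ℝ) ^ 3 + 4 * n ^ 2 - n) / 12) / (wienerIndex (Gn n) : ℝ))
      Filter.atTop (nhds (1 / 6)) := by
  have hK : Tendsto (fun n : ℕ => ((n : ℝ) ^ 3 + 4 * n ^ 2 - n) / 12 / n ^ 3) atTop
      (𝓝 (1 / 12)) := by
    have hpoly : Tendsto (fun x : ℝ => (1 + 4 * x - x ^ 2) / 12) (𝓝 0) (𝓝 (1 / 12)) :=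
      Continuous.tendsto' (by fun_prop) 0 _ (by norm_num)
    refine (hpoly.comp tendsto_inv_atTop_nhds_zero_nat).congr' ?_
    filter_upwards [eventually_ne_atTop 0] with n hn
    simp only [Function.comp_apply]
    field_simp
  have hratio := hK.div Gn.tendsto_wienerIndex_div_cube (by norm_num)
  rw [show (1 / 6 : ℝ) = 1 / 12 / (1 / 2) by norm_num]
  refine hratio.congr' ?_
  filter_upwards [eventually_ne_atTop 0] with n hn
  exact div_div_div_cancel_right₀ (by positivity) _ _
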